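/- arXiv:0910.3789 — 2 statements merged into one kernel-verified Lean document; each statement's English description precedes it below -/
import Mathlib

section
/- Let H be a real Hilbert space and let L : ℝ → B(H) be a continuously differentiable family of bounded self-adjoint operators. Assume: (H1) there exist K > 0 and α > 0 such that ⟨L(k)U, U⟩ ≥ α‖U‖² for all U whenever |k| ≥ K; (H2) for every k ≠ 0, L(k) = T_k + C_k with T_k self-adjoint and coercive and C_k compact; (H3) for all k₁ ≥ k₂ ≥ 0 and all U, ⟨L(k₁)U, U⟩ ≥ ⟨L(k₂)U, U⟩, and if k > 0, U ≠ 0 and L(k)U = 0 then ⟨L'(k)U, U⟩ > 0; (H4) there exist λ > 0 and φ₀ ≠ 0 with L(0)φ₀ = −λφ₀ and ⟨L(0)U, U⟩ ≥ 0 for all U ⊥ φ₀. Then there exists k₀ > 0 such that L(k₀) is nonnegative (⟨L(k₀)U, U⟩ ≥ 0 for all U ∈ H) and the kernel of L(k₀) is exactly one-dimensional. -/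
/-!
Let `k₀` be the infimum of the `k > 0` with `L k ≥ 0`. It is positive because
`⟪L k φ₀, φ₀⟫ < 0` near `k = 0`, and `L k₀ ≥ 0` by continuity. As `L k` is not nonnegative just
below `k₀`, there are unit vectors `u n` with `⟪L k₀ (u n), u n⟫ → 0`, hence `L k₀ (u n) → 0`;
writing `L k₀ = T + C` with `T` coercive and `C` compact, a subsequence of `u n` converges to a
unit vector of the kernel.

If `X` is in the kernel and `X ⊥ φ₀`, then `k ↦ ⟪L k X, X⟫` is nonnegative at `0`,
nondecreasing, and zero at `k₀`, so it vanishes on `[0, k₀]` and its derivative at `k₀` is zero,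
which (H3) forbids unless `X = 0`. Thus `⟪φ₀, ·⟫` is injective on the nonzero kernel.
-/

open RealInnerProductSpace

section

open Filter Topology Set Module

open scoped NNReal

theorem Submodule.finrank_eq_one_of_ne_bot_of_injOn {K V : Type*} [Field K] [AddCommGroup V]
    [Module K V] {W : Submodule K V} (f : V →ₗ[K] K) (hW : W ≠ ⊥)
    (hf : ∀ x ∈ W, f x = 0 → x = 0) : finrank K W = 1 := by
  have hinj : Function.Injective (f ∘ₗ W.subtype) := by
    rw [← LinearMap.ker_eq_bot, LinearMap.ker_eq_bot']
    exact fun x hx => Subtype.ext (hf x x.2 hx)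
  have : FiniteDimensional K W := Module.Finite.of_injective _ hinj
  have hle : finrank K W ≤ 1 := by
    simpa using LinearMap.finrank_le_finrank_of_injective hinj
  have hne : finrank K W ≠ 0 := by rwa [Ne, Submodule.finrank_eq_zero]
  omega

theorem HasDerivAt.eq_zero_of_eqOn_Icc {f : ℝ → ℝ} {f' a b c : ℝ} (hf : HasDerivAt f f' b)
    (hab : a < b) (hc : EqOn f (fun _ => c) (Icc a b)) : f' = 0 :=
  (uniqueDiffOn_Icc hab b (right_mem_Icc.2 hab.le)).eq_deriv _ hf.hasDerivWithinAt
    ((hasDerivWithinAt_const b _ c).congr hc (hc (right_mem_Icc.2 hab.le)))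

theorem exists_norm_eq_one_apply_eq_zero_of_antilipschitz_add_compact
    {𝕜 E F : Type*} [NontriviallyNormedField 𝕜] [NormedAddCommGroup E] [NormedSpace 𝕜 E]
    [CompleteSpace E] [NormedAddCommGroup F] [NormedSpace 𝕜 F]
    {T C : E →L[𝕜] F} {K : ℝ≥0} (hT : AntilipschitzWith K T) (hC : IsCompactOperator C)
    {u : ℕ → E} (hu : ∀ n, ‖u n‖ = 1) (hlim : Tendsto (fun n => (T + C) (u n)) atTop (𝓝 0)) :
    ∃ x, ‖x‖ = 1 ∧ (T + C) x = 0 := by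
  obtain ⟨S, hS, hCS⟩ := hC.image_closedBall_subset_compact 1
  obtain ⟨v, -, φ, hφ, hCv⟩ :=
    hS.tendsto_subseq fun n => hCS ⟨u n, by simp [hu n], rfl⟩
  have hlimφ := hlim.comp hφ.tendsto_atTop
  have hTv : Tendsto (fun n => T (u (φ n))) atTop (𝓝 (-v)) := by
    simpa using hlimφ.sub hCv
  obtain ⟨x, hx⟩ : -v ∈ range T :=
    (hT.isClosed_range T.uniformContinuous).mem_of_tendsto hTv
      (Eventually.of_forall fun n => mem_range_self _)
  have hux : Tendsto (u ∘ φ) atTop (𝓝 x) :=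
    (hT.isInducing T.continuous).tendsto_nhds_iff.2 (hx ▸ hTv)
  refine ⟨x, ?_, tendsto_nhds_unique (((T + C).continuous.tendsto x).comp hux) hlimφ⟩
  exact tendsto_nhds_unique hux.norm (by simp [hu])

variable {H : Type*} [NormedAddCommGroup H] [InnerProductSpace ℝ H]

namespace ContinuousLinearMap.IsPositive

theorem norm_apply_sq_le {A : H →L[ℝ] H} (hA : A.IsPositive) (x : H) :
    ‖A x‖ ^ 2 ≤ ‖A‖ * ⟪A x, x⟫ := by
  rcases eq_or_ne A 0 with rfl | hA0
  · simp
  have hnorm : 0 < ‖A‖ := norm_pos_iff.2 hA0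
  -- test the positivity of `A` on `x - ‖A‖⁻¹ • A x`
  have h := hA.inner_nonneg_left (x - ‖A‖⁻¹ • A x)
  have hsymm : ⟪A (A x), x⟫ = ‖A x‖ ^ 2 := by
    rw [hA.inner_left_eq_inner_right, real_inner_self_eq_norm_sq]
  have hbound : ⟪A (A x), A x⟫ ≤ ‖A‖ * ‖A x‖ ^ 2 :=
    (real_inner_le_norm _ _).trans (by nlinarith [A.le_opNorm (A x), norm_nonneg (A x)])
  simp only [map_sub, map_smul, inner_sub_left, inner_sub_right, real_inner_smul_left,
    real_inner_smul_right, hsymm, real_inner_self_eq_norm_sq] at h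
  have hscaled : ‖A‖⁻¹ * (‖A‖⁻¹ * ⟪A (A x), A x⟫) ≤ ‖A‖⁻¹ * ‖A x‖ ^ 2 :=
    calc _ ≤ ‖A‖⁻¹ * (‖A‖⁻¹ * (‖A‖ * ‖A x‖ ^ 2)) := by gcongr
      _ = _ := by field_simp
  rw [← inv_mul_le_iff₀ hnorm]
  linarith

theorem tendsto_apply_zero {A : H →L[ℝ] H} (hA : A.IsPositive) {ι : Type*} {l : Filter ι}
    {u : ι → H} (hu : Tendsto (fun i => ⟪A (u i), u i⟫) l (𝓝 0)) :
    Tendsto (fun i => A (u i)) l (𝓝 0) := by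
  have hsq : Tendsto (fun i => ‖A (u i)‖ ^ 2) l (𝓝 0) :=
    squeeze_zero (fun _ => by positivity) (fun i => hA.norm_apply_sq_le (u i))
      (by simpa using hu.const_mul ‖A‖)
  rw [tendsto_zero_iff_norm_tendsto_zero]
  simpa using hsq.sqrt

theorem exists_seq_tendsto_apply_zero {A : H →L[ℝ] H}
    (hA : A.IsPositive) (h : ∀ δ > 0, ∃ U, ‖U‖ = 1 ∧ ⟪A U, U⟫ < δ) :
    ∃ u : ℕ → H, (∀ n, ‖u n‖ = 1) ∧ Tendsto (fun n => A (u n)) atTop (𝓝 0) := by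
  choose u hu hlt using fun n : ℕ => h (1 / (n + 1)) Nat.one_div_pos_of_nat
  refine ⟨u, hu, hA.tendsto_apply_zero ?_⟩
  exact squeeze_zero (fun n => hA.inner_nonneg_left (u n)) (fun n => (hlt n).le)
    tendsto_one_div_add_atTop_nhds_zero_nat

end ContinuousLinearMap.IsPositive

theorem exists_norm_eq_one_inner_lt_of_norm_sub_lt {A B : H →L[ℝ] H} {δ : ℝ}
    (hAB : ‖A - B‖ < δ) {U : H} (hU : ⟪B U, U⟫ < 0) : ∃ V, ‖V‖ = 1 ∧ ⟪A V, V⟫ < δ := by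
  have hU0 : U ≠ 0 := by rintro rfl; simp at hU
  set V := ‖U‖⁻¹ • U
  have hV : ‖V‖ = 1 := norm_smul_inv_norm hU0
  have hBV : ⟪B V, V⟫ < 0 := by
    simp only [V, map_smul, real_inner_smul_left, real_inner_smul_right, ← mul_assoc]
    exact mul_neg_of_pos_of_neg (by positivity) hU
  have hAB' : ⟪(A - B) V, V⟫ ≤ ‖A - B‖ :=
    (real_inner_le_norm _ _).trans (by simpa [hV] using (A - B).le_opNorm V)
  rw [sub_apply, inner_sub_left] at hAB'
  exact ⟨V, hV, by linarith⟩

theorem exists_norm_eq_one_inner_lt_of_frequently {L : ℝ → H →L[ℝ] H} {k₀ : ℝ}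
    (hL : ContinuousAt L k₀) (hneg : ∃ᶠ k in 𝓝 k₀, ∃ U, ⟪L k U, U⟫ < 0) :
    ∀ δ > 0, ∃ U, ‖U‖ = 1 ∧ ⟪L k₀ U, U⟫ < δ := by
  intro δ hδ
  have hclose : ∀ᶠ k in 𝓝 k₀, ‖L k₀ - L k‖ < δ := by
    simpa [← dist_eq_norm, dist_comm] using hL.eventually (Metric.ball_mem_nhds _ hδ)
  obtain ⟨k, ⟨U, hU⟩, hk⟩ := (hneg.and_eventually hclose).exists
  exact exists_norm_eq_one_inner_lt_of_norm_sub_lt hk hU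

theorem exists_first_nonneg_param {L : ℝ → H →L[ℝ] H} (hL : Continuous L) {K : ℝ}
    (hK : 0 < K) (hLK : ∀ U, 0 ≤ ⟪L K U, U⟫) {φ : H} (hφ : ⟪L 0 φ, φ⟫ < 0) :
    ∃ k₀ > 0, (∀ U, 0 ≤ ⟪L k₀ U, U⟫) ∧ ∀ k ∈ Ioo 0 k₀, ∃ U, ⟪L k U, U⟫ < 0 := by
  have hform : ∀ U, Continuous fun k => ⟪L k U, U⟫ := fun U =>
    (hL.clm_apply continuous_const).inner continuous_const
  set P := {k | ∀ U, 0 ≤ ⟪L k U, U⟫}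
  have hP : IsClosed P := by
    simp only [P, ofPred_forall]
    exact isClosed_iInter fun U => isClosed_le continuous_const (hform U)
  set S := Ioi 0 ∩ P
  have hS : S.Nonempty := ⟨K, hK, hLK⟩
  have hbdd : BddBelow S := ⟨0, fun k hk => hk.1.le⟩
  obtain ⟨ε, hε, hball⟩ := Metric.mem_nhds_iff.1 ((isOpen_lt (hform φ) continuous_const).mem_nhds hφ)
  have hεS : ε ≤ sInf S := le_csInf hS fun k ⟨hk, hkP⟩ => le_of_not_gt fun hlt =>
    (hkP φ).not_gt (hball (by simpa [abs_of_pos (mem_Ioi.1 hk)] using hlt))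
  refine ⟨sInf S, hε.trans_le hεS, ?_, fun k hk => ?_⟩
  · exact hP.closure_subset (closure_mono inter_subset_right (csInf_mem_closure hS hbdd))
  · by_contra! h
    exact (csInf_le hbdd ⟨hk.1, h⟩).not_gt hk.2

theorem inner_deriv_apply_self_eq_zero_of_monotoneOn {L : ℝ → H →L[ℝ] H} {L' : H →L[ℝ] H}
    {k₀ : ℝ} {X : H} (hL : HasDerivAt L L' k₀) (hk₀ : 0 < k₀)
    (hmono : MonotoneOn (fun k => ⟪L k X, X⟫) (Icc 0 k₀)) (h0 : 0 ≤ ⟪L 0 X, X⟫)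
    (hX : L k₀ X = 0) : ⟪L' X, X⟫ = 0 := by
  have hderiv : HasDerivAt (fun k => ⟪L k X, X⟫) ⟪L' X, X⟫ k₀ := by
    simpa using (hL.clm_apply (hasDerivAt_const k₀ X)).inner ℝ (hasDerivAt_const k₀ X)
  refine hderiv.eq_zero_of_eqOn_Icc hk₀ (c := 0) fun k hk => le_antisymm ?_ ?_
  · simpa [hX] using hmono hk (right_mem_Icc.2 hk₀.le) hk.2
  · exact h0.trans (hmono (left_mem_Icc.2 hk₀.le) hk hk.1)

end

/-- Key intermediate step of the paper: there is a first parameter `k₀ > 0` at which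
`L(k₀)` is nonnegative and its kernel is exactly one-dimensional. -/
theorem exists_parameter_with_one_dimensional_kernel
    {H : Type*} [NormedAddCommGroup H] [InnerProductSpace ℝ H] [CompleteSpace H]
    (L : ℝ → H →L[ℝ] H)
    (hL : ContDiff ℝ 1 L)
    (hsym : ∀ (k : ℝ) (U V : H), ⟪L k U, V⟫ = ⟪U, L k V⟫)
    -- (H1)
    (H1 : ∃ K > (0 : ℝ), ∃ α > (0 : ℝ), ∀ k : ℝ, K ≤ |k| →
      ∀ U : H, α * ‖U‖ ^ 2 ≤ ⟪L k U, U⟫)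
    -- (H2)
    (H2 : ∀ k : ℝ, k ≠ 0 → ∃ T C : H →L[ℝ] H, L k = T + C ∧
      (∀ U V : H, ⟪T U, V⟫ = ⟪U, T V⟫) ∧
      (∃ c > (0 : ℝ), ∀ U : H, c * ‖U‖ ^ 2 ≤ ⟪T U, U⟫) ∧
      IsCompactOperator C)
    -- (H3)
    (H3mono : ∀ k₁ k₂ : ℝ, 0 ≤ k₂ → k₂ ≤ k₁ →
      ∀ U : H, ⟪L k₂ U, U⟫ ≤ ⟪L k₁ U, U⟫)
    (H3ker : ∀ k : ℝ, 0 < k → ∀ U : H, U ≠ 0 → L k U = 0 →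
      0 < ⟪deriv L k U, U⟫)
    -- (H4)
    (H4 : ∃ (lam : ℝ) (φ₀ : H), 0 < lam ∧ φ₀ ≠ 0 ∧ L 0 φ₀ = (-lam) • φ₀ ∧
      ∀ U : H, ⟪U, φ₀⟫ = 0 → 0 ≤ ⟪L 0 U, U⟫) :
    ∃ k₀ : ℝ, 0 < k₀ ∧ (∀ U : H, 0 ≤ ⟪L k₀ U, U⟫) ∧
      Module.finrank ℝ (LinearMap.ker (L k₀ : H →ₗ[ℝ] H)) = 1 := by
  obtain ⟨K, hK, α, hα, hLK⟩ := H1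
  obtain ⟨lam, φ₀, hlam, hφ₀, hLφ₀, hperp⟩ := H4
  have hφ₀neg : ⟪L 0 φ₀, φ₀⟫ < 0 := by
    rw [hLφ₀, real_inner_smul_left, real_inner_self_eq_norm_sq, neg_mul, neg_lt_zero]
    positivity
  obtain ⟨k₀, hk₀, hnonneg, hneg⟩ := exists_first_nonneg_param hL.continuous hK
    (fun U => (by positivity : 0 ≤ α * ‖U‖ ^ 2).trans (hLK K (abs_of_pos hK).ge U)) hφ₀neg
  obtain ⟨T, C, hTC, -, ⟨c, hc, hcoer⟩, hC⟩ := H2 k₀ hk₀.ne'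
  lift c to NNReal using hc.le
  have hT : AntilipschitzWith c⁻¹ T :=
    T.antilipschitz_of_forall_le_inner_map (mod_cast hc) fun x => by
      rw [mul_comm, Real.norm_eq_abs]
      exact (hcoer x).trans (le_abs_self _)
  have hfreq : ∃ᶠ k in nhds k₀, ∃ U, ⟪L k U, U⟫ < 0 :=
    (Filter.eventually_of_mem (Ioo_mem_nhdsLT hk₀) hneg).frequently.filter_mono
      nhdsWithin_le_nhds
  obtain ⟨u, hu, hLu⟩ := ((L k₀).isPositive_iff.2 ⟨hsym k₀, hnonneg⟩).exists_seq_tendsto_apply_zero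
    (exists_norm_eq_one_inner_lt_of_frequently hL.continuous.continuousAt hfreq)
  obtain ⟨x, hx, hLx⟩ :=
    exists_norm_eq_one_apply_eq_zero_of_antilipschitz_add_compact hT hC hu (hTC ▸ hLu)
  have hker : ∀ X ∈ LinearMap.ker (L k₀ : H →ₗ[ℝ] H), innerₗ H φ₀ X = 0 → X = 0 := by
    intro X hX hXφ₀
    by_contra hX0
    refine (H3ker k₀ hk₀ X hX0 hX).ne' (inner_deriv_apply_self_eq_zero_of_monotoneOn
      (hL.differentiable one_ne_zero k₀).hasDerivAt hk₀
      (fun a ha b _ hab => H3mono b a ha.1 hab X) (hperp X ?_) hX)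
    rwa [real_inner_comm]
  refine ⟨k₀, hk₀, hnonneg, Submodule.finrank_eq_one_of_ne_bot_of_injOn (innerₗ H φ₀) ?_ hker⟩
  exact (Submodule.ne_bot_iff _).2 ⟨x, hTC ▸ hLx, norm_ne_zero_iff.1 (hx ▸ one_ne_zero)⟩
end

section
/- Let ρ∞ > 0, K∞ > 0, g > 0, u∞ and c be real numbers satisfying ρ∞ g > (u∞ − c)². For real numbers ξ and k, set s = (K∞ + ρ∞)(k² + ξ²) + g and P = ρ∞ K∞ (k² + ξ²)² + ρ∞ g k² + (ρ∞ g − (u∞ − c)²) ξ². Then P ≥ 0, s > 0, every real root μ of the quadratic μ² − s μ + P = 0 satisfies μ ≥ 0, and if in addition k ≠ 0, then every real root satisfies μ > 0. -/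
/-- Location of the essential spectrum for the Euler–Korteweg transverse operator:
under the subsonicity condition `ρ∞ g > (u∞ - c)²`, the dispersion quadratic
`μ² - s μ + P` has only nonnegative real roots, and only positive ones for `k ≠ 0`. -/
theorem euler_korteweg_essential_spectrum_positive
    (rinf Kinf g uinf c : ℝ)
    (hrinf : 0 < rinf) (hKinf : 0 < Kinf) (hg : 0 < g)
    (hsub : (uinf - c) ^ 2 < rinf * g)
    (ξ k : ℝ) :
    0 ≤ rinf * Kinf * (k ^ 2 + ξ ^ 2) ^ 2 + rinf * g * k ^ 2 +
        (rinf * g - (uinf - c) ^ 2) * ξ ^ 2 ∧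
    0 < (Kinf + rinf) * (k ^ 2 + ξ ^ 2) + g ∧
    (∀ μ : ℝ,
      μ ^ 2 - ((Kinf + rinf) * (k ^ 2 + ξ ^ 2) + g) * μ +
        (rinf * Kinf * (k ^ 2 + ξ ^ 2) ^ 2 + rinf * g * k ^ 2 +
          (rinf * g - (uinf - c) ^ 2) * ξ ^ 2) = 0 → 0 ≤ μ) ∧
    (k ≠ 0 → ∀ μ : ℝ,
      μ ^ 2 - ((Kinf + rinf) * (k ^ 2 + ξ ^ 2) + g) * μ +
        (rinf * Kinf * (k ^ 2 + ξ ^ 2) ^ 2 + rinf * g * k ^ 2 +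
          (rinf * g - (uinf - c) ^ 2) * ξ ^ 2) = 0 → 0 < μ) := by
  have hP : 0 ≤ rinf * Kinf * (k ^ 2 + ξ ^ 2) ^ 2 + rinf * g * k ^ 2 +
      (rinf * g - (uinf - c) ^ 2) * ξ ^ 2 := by
    nlinarith [mul_nonneg (mul_pos hrinf hKinf).le (sq_nonneg (k ^ 2 + ξ ^ 2)),
      mul_nonneg (mul_pos hrinf hg).le (sq_nonneg k),
      mul_nonneg (sub_nonneg.mpr hsub.le) (sq_nonneg ξ)]
  have hs : 0 < (Kinf + rinf) * (k ^ 2 + ξ ^ 2) + g := by positivity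
  refine ⟨hP, hs, ?_, ?_⟩
  · intro μ hμ
    by_contra h
    push_neg at h
    nlinarith [mul_pos hs (neg_pos.mpr h)]
  · intro hk μ hμ
    have hk2 : 0 < k ^ 2 := by positivity
    have hP' : 0 < rinf * Kinf * (k ^ 2 + ξ ^ 2) ^ 2 + rinf * g * k ^ 2 +
        (rinf * g - (uinf - c) ^ 2) * ξ ^ 2 := by
      nlinarith [mul_nonneg (mul_pos hrinf hKinf).le (sq_nonneg (k ^ 2 + ξ ^ 2)),
        mul_pos (mul_pos hrinf hg) hk2,
        mul_nonneg (sub_nonneg.mpr hsub.le) (sq_nonneg ξ)]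
    rcases lt_or_ge 0 μ with h | h
    · exact h
    · nlinarith [mul_nonneg hs.le (neg_nonneg.mpr h)]
end
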